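/- For every bounded linear operator A on H and every real r ≥ 1, one has ber(A)^r ≤ inf_{t∈[0,1]} ‖A‖_{t-ber}^r ≤ (1/2)·‖ |A|^r + |A*|^r ‖_ber. -/

import Mathlib

open ContinuousLinearMap
open scoped InnerProductSpace

/-- The `t`-Berezin norm of `A` with respect to the family `k` of (normalized reproducing
kernel) vectors. -/
noncomputable def tber {E : Type*} [NormedAddCommGroup E] [InnerProductSpace ℂ E]
    [CompleteSpace E] {ι : Type*} (k : ι → E) (t : ℝ) (A : E →L[ℂ] E) : ℝ :=
  ⨆ p : ι × ι, (t * ‖⟪A (k p.1), k p.2⟫_ℂ‖ + (1 - t) * ‖⟪adjoint A (k p.1), k p.2⟫_ℂ‖)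

/-- The Berezin norm of `A` with respect to the family `k`. -/
noncomputable def berNorm {E : Type*} [NormedAddCommGroup E] [InnerProductSpace ℂ E]
    {ι : Type*} (k : ι → E) (A : E →L[ℂ] E) : ℝ :=
  ⨆ p : ι × ι, ‖⟪A (k p.1), k p.2⟫_ℂ‖

/-- The Berezin number of `A` with respect to the family `k`. -/
noncomputable def berNum {E : Type*} [NormedAddCommGroup E] [InnerProductSpace ℂ E]
    {ι : Type*} (k : ι → E) (A : E →L[ℂ] E) : ℝ :=
  ⨆ l : ι, ‖⟪A (k l), k l⟫_ℂ‖

/-- The modulus `|A| = (A*A)^(1/2)` of an operator, via the continuous functional calculus. -/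
noncomputable def absOp {H : Type*} [NormedAddCommGroup H] [InnerProductSpace ℂ H]
    [CompleteSpace H] (A : H →L[ℂ] H) : H →L[ℂ] H :=
  cfc Real.sqrt (adjoint A * A)

/-- Real powers of a (positive) operator via the continuous functional calculus. -/
noncomputable def rpowOp {H : Type*} [NormedAddCommGroup H] [InnerProductSpace ℂ H]
    [CompleteSpace H] (A : H →L[ℂ] H) (r : ℝ) : H →L[ℂ] H :=
  cfc (fun x : ℝ => x ^ r) A

section Aux

variable {H : Type*} [NormedAddCommGroup H] [InnerProductSpace ℂ H] [CompleteSpace H]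

/-- `re ⟪·,·⟫` is monotone w.r.t. the Loewner order. -/
lemma re_inner_le_of_le {S T : H →L[ℂ] H} (h : S ≤ T) (x : H) :
    Complex.re ⟪S x, x⟫_ℂ ≤ Complex.re ⟪T x, x⟫_ℂ := by
  have h0 := ((le_def S T).mp h).re_inner_nonneg_left x
  have h1 : RCLike.re ⟪(T - S) x, x⟫_ℂ = Complex.re ⟪T x, x⟫_ℂ - Complex.re ⟪S x, x⟫_ℂ := by
    simp only [sub_apply, inner_sub_left]
    simp [RCLike.re]
  rw [h1] at h0
  linarith

lemma pow_comm_aux (A : H →L[ℂ] H) (n : ℕ) :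
    A * (star A * A) ^ n = (A * star A) ^ n * A := by
  induction n with
  | zero => simp
  | succ n ih =>
    rw [pow_succ, ← mul_assoc, ih, pow_succ]
    simp only [mul_assoc]

lemma aeval_comm_aux (A : H →L[ℂ] H) (p : Polynomial ℝ) :
    A * Polynomial.aeval (star A * A) p = Polynomial.aeval (A * star A) p * A := by
  induction p using Polynomial.induction_on with
  | C r => simp [Polynomial.aeval_C, Algebra.algebraMap_eq_smul_one, mul_smul_comm, smul_mul_assoc]
  | add p q hp hq => simp [map_add, mul_add, add_mul, hp, hq]
  | monomial n r _ =>
    simp only [map_mul, Polynomial.aeval_C, map_pow, Polynomial.aeval_X]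
    calc A * (algebraMap ℝ _ r * (star A * A) ^ (n+1))
        = algebraMap ℝ _ r * (A * (star A * A) ^ (n+1)) := by
          rw [Algebra.algebraMap_eq_smul_one]
          simp [mul_smul_comm, smul_mul_assoc]
      _ = algebraMap ℝ _ r * ((A * star A) ^ (n+1) * A) := by rw [pow_comm_aux]
      _ = algebraMap ℝ _ r * (A * star A) ^ (n+1) * A := by rw [mul_assoc]


open Polynomial in
lemma cfc_comm_aux (A : H →L[ℂ] H) {g : ℝ → ℝ} (hg : Continuous g) :
    A * cfc g (star A * A) = cfc g (A * star A) * A := by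
  set a := star A * A with ha_def
  set b := A * star A with hb_def
  have ha : IsSelfAdjoint a := IsSelfAdjoint.star_mul_self A
  have hb : IsSelfAdjoint b := by
    have := IsSelfAdjoint.star_mul_self (star A)
    rwa [star_star] at this
  set M : ℝ := max (‖a‖ * ‖(1 : H →L[ℂ] H)‖) (‖b‖ * ‖(1 : H →L[ℂ] H)‖) with hM
  have hspec : ∀ (c : H →L[ℂ] H), ‖c‖ * ‖(1 : H →L[ℂ] H)‖ ≤ M →
      spectrum ℝ c ⊆ Set.Icc (-M) M := by
    intro c hc x hx
    have := (spectrum.norm_le_norm_mul_of_mem hx).trans hc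
    rw [Real.norm_eq_abs] at this
    exact ⟨by linarith [neg_abs_le x], by linarith [le_abs_self x]⟩
  have hsa := hspec a (le_max_left _ _)
  have hsb := hspec b (le_max_right _ _)
  set D := A * cfc g a - cfc g b * A with hD
  have key : ∀ ε : ℝ, 0 < ε → ‖D‖ ≤ (2 * ‖A‖) * ε := by
    intro ε hε
    -- find a polynomial approximating g on Icc (-M) M
    have hgK : (ContinuousMap.mk g hg).restrict (Set.Icc (-M) M) ∈
        closure (polynomialFunctions (Set.Icc (-M) M) : Set C(Set.Icc (-M) M, ℝ)) := by
      rw [← Subalgebra.topologicalClosure_coe, polynomialFunctions_closure_eq_top]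
      simp
    rw [Metric.mem_closure_iff] at hgK
    obtain ⟨P, hPmem, hPdist⟩ := hgK ε hε
    rw [polynomialFunctions_coe, Set.mem_range] at hPmem
    obtain ⟨q, rfl⟩ := hPmem
    have happrox : ∀ x ∈ Set.Icc (-M) M, ‖g x - q.eval x‖ ≤ ε := by
      intro x hx
      have := ContinuousMap.dist_apply_le_dist (f := (ContinuousMap.mk g hg).restrict (Set.Icc (-M) M))
        (g := Polynomial.toContinuousMapOnAlgHom (Set.Icc (-M) M) q) ⟨x, hx⟩
      rw [Real.dist_eq] at this
      have h5 := this.trans hPdist.le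
      simpa [Real.norm_eq_abs, ContinuousMap.restrict_apply,
        Polynomial.toContinuousMapOnAlgHom_apply, Polynomial.toContinuousMapOn_apply,
        Polynomial.toContinuousMap_apply] using h5
    have hqc : Continuous fun x : ℝ => q.eval x := q.continuous
    have h1 : ‖cfc g a - cfc (fun x => q.eval x) a‖ ≤ ε := by
      rw [← cfc_sub _ _ a hg.continuousOn hqc.continuousOn]
      exact norm_cfc_le hε.le fun x hx => happrox x (hsa hx)
    have h2 : ‖cfc (fun x => q.eval x) b - cfc g b‖ ≤ ε := by
      rw [← cfc_sub _ _ b hqc.continuousOn hg.continuousOn]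
      exact norm_cfc_le hε.le fun x hx => by
        simpa [abs_sub_comm, Real.norm_eq_abs] using happrox x (hsb hx)
    have hcomm : A * cfc (fun x => q.eval x) a = cfc (fun x => q.eval x) b * A := by
      rw [cfc_polynomial q a, cfc_polynomial q b, aeval_comm_aux]
    have : D = A * (cfc g a - cfc (fun x => q.eval x) a)
        + (cfc (fun x => q.eval x) b - cfc g b) * A := by
      rw [hD, mul_sub, sub_mul, hcomm]; abel
    rw [this]
    calc ‖A * (cfc g a - cfc (fun x => q.eval x) a)
        + (cfc (fun x => q.eval x) b - cfc g b) * A‖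
        ≤ ‖A * (cfc g a - cfc (fun x => q.eval x) a)‖
          + ‖(cfc (fun x => q.eval x) b - cfc g b) * A‖ := norm_add_le _ _
      _ ≤ ‖A‖ * ε + ε * ‖A‖ := by
          have g1 := (norm_mul_le A (cfc g a - cfc (fun x => q.eval x) a)).trans
            (mul_le_mul_of_nonneg_left h1 (norm_nonneg A))
          have g2 := (norm_mul_le (cfc (fun x => q.eval x) b - cfc g b) A).trans
            (mul_le_mul_of_nonneg_right h2 (norm_nonneg A))
          exact add_le_add g1 g2
      _ = (2 * ‖A‖) * ε := by ring
  have hD0 : ‖D‖ ≤ 0 := by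
    apply le_of_forall_pos_le_add
    intro ε hε
    have hpos : (0:ℝ) < 2 * ‖A‖ + 1 := by positivity
    have h := key (ε / (2 * ‖A‖ + 1)) (by positivity)
    have h2 : 2 * ‖A‖ * (ε / (2 * ‖A‖ + 1)) = (2 * ‖A‖ / (2 * ‖A‖ + 1)) * ε := by ring
    have h3 : 2 * ‖A‖ / (2 * ‖A‖ + 1) ≤ 1 := by
      rw [div_le_one hpos]; linarith
    have h4 : (2 * ‖A‖ / (2 * ‖A‖ + 1)) * ε ≤ 1 * ε := by
      apply mul_le_mul_of_nonneg_right h3 hε.le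
    rw [h2] at h
    linarith
  exact sub_eq_zero.mp (by rw [← hD]; exact norm_le_zero_iff.mp hD0)

/-- tangent line inequality for rpow -/
lemma tangent_rpow {r : ℝ} (hr : 1 ≤ r) {c : ℝ} (hc : 0 ≤ c) {x : ℝ} (hx : 0 ≤ x) :
    r * c ^ (r - 1) * x + (c ^ r - r * c ^ (r - 1) * c) ≤ x ^ r := by
  rcases eq_or_lt_of_le hr with heq | hlt
  · subst heq
    simp [Real.rpow_one]
  · rcases eq_or_lt_of_le hc with hc0 | hcpos
    · subst hc0
      have h1 : (0:ℝ) ^ (r - 1) = 0 := Real.zero_rpow (by linarith)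
      have h2 : (0:ℝ) ^ r = 0 := Real.zero_rpow (by linarith)
      simp [h1, h2]
      exact Real.rpow_nonneg hx r
    · set q : ℝ := r / (r - 1) with hq
      have hconj : r.HolderConjugate q := Real.HolderConjugate.conjExponent hlt
      have hyoung := Real.young_inequality_of_nonneg hx (Real.rpow_nonneg hc (r-1)) hconj
      -- (c ^ (r-1)) ^ q = c ^ r
      have h3 : (c ^ (r - 1)) ^ q = c ^ r := by
        rw [← Real.rpow_mul hc]
        congr 1
        have h0 : r - 1 ≠ 0 := by linarith
        rw [hq, mul_comm, div_mul_cancel₀ r h0]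
      have h4 : c ^ (r - 1) * c = c ^ r := by
        rw [← Real.rpow_add_one (ne_of_gt hcpos) (r-1)]
        norm_num
      have hrq : r / q = r - 1 := by
        rw [hq]
        field_simp
      rw [h3] at hyoung
      -- hyoung : x * c^(r-1) ≤ x^r / r + c^r / q
      have hr0 : (0:ℝ) < r := by linarith
      have := mul_le_mul_of_nonneg_left hyoung hr0.le
      -- r * (x * c^(r-1)) ≤ r * (x^r/r + c^r/q)
      have h5 : r * (x ^ r / r + c ^ r / q) = x ^ r + (r - 1) * c ^ r := by
        rw [mul_add, mul_div_cancel₀ _ (ne_of_gt hr0),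
          show r * (c ^ r / q) = r / q * c ^ r by ring, hrq]
      nlinarith [h4]

lemma re_inner_le_of_le' {S T : H →L[ℂ] H} (h : S ≤ T) (x : H) :
    Complex.re ⟪S x, x⟫_ℂ ≤ Complex.re ⟪T x, x⟫_ℂ := by
  have h0 := ((le_def S T).mp h).re_inner_nonneg_left x
  have h1 : RCLike.re ⟪(T - S) x, x⟫_ℂ = Complex.re ⟪T x, x⟫_ℂ - Complex.re ⟪S x, x⟫_ℂ := by
    simp only [sub_apply, inner_sub_left]
    simp [RCLike.re]
  rw [h1] at h0
  linarith

lemma continuous_rpow_fun {r : ℝ} (hr : 1 ≤ r) : Continuous fun x : ℝ => x ^ r := by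
  rw [continuous_iff_continuousAt]
  intro x
  exact Real.continuousAt_rpow_const x r (Or.inr (by linarith))

lemma mccarthy {T : H →L[ℂ] H} (hT : 0 ≤ T) {r : ℝ} (hr : 1 ≤ r) {u : H} (hu : ‖u‖ = 1) :
    (Complex.re ⟪T u, u⟫_ℂ) ^ r ≤ Complex.re ⟪cfc (fun x : ℝ => x ^ r) T u, u⟫_ℂ := by
  have hTpos := (nonneg_iff_isPositive T).mp hT
  have hsaT : IsSelfAdjoint T := IsSelfAdjoint.of_nonneg hT
  set c := Complex.re ⟪T u, u⟫_ℂ with hc_def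
  have hc : 0 ≤ c := by
    have := hTpos.re_inner_nonneg_left u
    simpa [RCLike.re] using this
  set d := r * c ^ (r - 1) with hd_def
  set e := c ^ r - d * c with he_def
  have hcont := continuous_rpow_fun hr
  have haff : Continuous fun x : ℝ => d * x + e := by fun_prop
  have hmono : cfc (fun x : ℝ => d * x + e) T ≤ cfc (fun x : ℝ => x ^ r) T := by
    apply cfc_mono (fun x hx => tangent_rpow hr hc (spectrum_nonneg_of_nonneg hT hx))
      haff.continuousOn hcont.continuousOn
  have heq : cfc (fun x : ℝ => d * x + e) T = d • T + e • (1 : H →L[ℂ] H) := by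
    rw [cfc_add T (fun x => d * x) (fun _ => e) (by fun_prop) (by fun_prop),
      cfc_const_mul d (fun x => x) T, cfc_id' ℝ T, cfc_const e T,
      Algebra.algebraMap_eq_smul_one]
  rw [heq] at hmono
  have h2 := re_inner_le_of_le' hmono u
  have h3 : Complex.re ⟪(d • T + e • (1 : H →L[ℂ] H)) u, u⟫_ℂ = d * c + e := by
    simp only [add_apply, smul_apply, one_apply, inner_add_left]
    rw [show d • T u = (d : ℂ) • T u from rfl, show e • (1 : H →L[ℂ] H) u = (e : ℂ) • u from rfl]
    simp only [inner_smul_left, Complex.conj_ofReal, Complex.add_re, Complex.mul_re,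
      Complex.ofReal_re, Complex.ofReal_im]
    have h4 : Complex.re ⟪u, u⟫_ℂ = 1 := by
      rw [show (Complex.re ⟪u, u⟫_ℂ) = RCLike.re ⟪u, u⟫_ℂ from rfl, inner_self_eq_norm_sq, hu]
      norm_num
    have h5 : Complex.im ⟪u, u⟫_ℂ = 0 := by
      rw [show (Complex.im ⟪u, u⟫_ℂ) = RCLike.im ⟪u, u⟫_ℂ from rfl]
      exact inner_self_im u
    rw [h4, h5]
    ring
  rw [h3] at h2
  have : d * c + e = c ^ r := by rw [he_def]; ring
  linarith

lemma isSelfAdjoint_inner_comm {P : H →L[ℂ] H} (hP : IsSelfAdjoint P) (x y : H) :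
    ⟪P x, y⟫_ℂ = ⟪x, P y⟫_ℂ := by
  conv_lhs => rw [← hP]
  rw [star_eq_adjoint, adjoint_inner_left]

lemma norm_sq_eq_re_inner {P : H →L[ℂ] H} (hP : IsSelfAdjoint P) (x : H) :
    ‖P x‖ ^ 2 = Complex.re ⟪P (P x), x⟫_ℂ := by
  rw [isSelfAdjoint_inner_comm hP (P x) x]
  rw [show Complex.re ⟪P x, P x⟫_ℂ = RCLike.re ⟪P x, P x⟫_ℂ from rfl, inner_self_eq_norm_sq]

set_option maxHeartbeats 1000000 in
lemma mixed_schwarz_eps (A : H →L[ℂ] H) {u : H} (v : H) (hu : ‖u‖ = 1) {ε : ℝ} (hε : 0 < ε) :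
    ‖⟪A u, v⟫_ℂ‖ ^ 2 ≤ (Complex.re ⟪cfc Real.sqrt (adjoint A * A) u, u⟫_ℂ + ε) *
      Complex.re ⟪cfc Real.sqrt (A * adjoint A) v, v⟫_ℂ := by
  have hsqrtc : Continuous fun x : ℝ => Real.sqrt x + ε := Real.continuous_sqrt.add continuous_const
  have hpos : ∀ x : ℝ, 0 < Real.sqrt (Real.sqrt x + ε) :=
    fun x => Real.sqrt_pos.mpr (by positivity)
  set p : ℝ → ℝ := fun x => Real.sqrt (Real.sqrt x + ε) with hp_def
  set q : ℝ → ℝ := fun x => (Real.sqrt (Real.sqrt x + ε))⁻¹ with hq_def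
  have hp : Continuous p := Real.continuous_sqrt.comp hsqrtc
  have hq : Continuous q := hp.inv₀ fun x => (hpos x).ne'
  set a := adjoint A * A with ha_def
  set b := A * adjoint A with hb_def
  have ha_sa : IsSelfAdjoint a := by
    rw [ha_def, ← star_eq_adjoint]; exact IsSelfAdjoint.star_mul_self A
  have hb_sa : IsSelfAdjoint b := by
    rw [hb_def, ← star_eq_adjoint]
    have := IsSelfAdjoint.star_mul_self (star A)
    rwa [star_star] at this
  have hb_nonneg : 0 ≤ b := by
    rw [hb_def, ← star_eq_adjoint]; exact mul_star_self_nonneg A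
  set P := cfc p a with hP_def
  set Q := cfc q a with hQ_def
  have hP_sa : IsSelfAdjoint P := cfc_predicate p a
  have hQ_sa : IsSelfAdjoint Q := cfc_predicate q a
  have hQP : Q * P = 1 := by
    rw [hP_def, hQ_def, ← cfc_mul q p a hq.continuousOn hp.continuousOn]
    have : (fun x => q x * p x) = fun _ : ℝ => (1 : ℝ) := by
      funext x
      exact inv_mul_cancel₀ (hpos x).ne'
    rw [this, cfc_const 1 a, map_one]
  have hQPu : Q (P u) = u := by
    rw [← mul_apply_eq_comp (F := H →L[ℂ] H), hQP, one_apply_eq_self]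
  have key : ⟪A u, v⟫_ℂ = ⟪P u, Q (adjoint A v)⟫_ℂ := by
    conv_lhs => rw [← hQPu]
    rw [← adjoint_inner_right A (Q (P u)) v]
    exact isSelfAdjoint_inner_comm hQ_sa (P u) (adjoint A v)
  -- bound ‖P u‖²
  have hPu : ‖P u‖ ^ 2 = Complex.re ⟪cfc Real.sqrt a u, u⟫_ℂ + ε := by
    rw [norm_sq_eq_re_inner hP_sa u, ← mul_apply_eq_comp (F := H →L[ℂ] H), hP_def,
      ← cfc_mul p p a hp.continuousOn hp.continuousOn]
    have h1 : (fun x => p x * p x) = fun x : ℝ => Real.sqrt x + ε := by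
      funext x
      exact Real.mul_self_sqrt (by positivity)
    rw [h1, cfc_add a Real.sqrt (fun _ => ε) Real.continuous_sqrt.continuousOn
      (by fun_prop), cfc_const ε a, Algebra.algebraMap_eq_smul_one]
    simp only [add_apply, inner_add_left, Complex.add_re, smul_apply, one_apply]
    congr 1
    rw [show (ε : ℝ) • (1 : H →L[ℂ] H) u = (ε : ℂ) • u from rfl]
    simp only [inner_smul_left, Complex.conj_ofReal, Complex.mul_re, Complex.ofReal_re,
      Complex.ofReal_im]
    have h4 : Complex.re ⟪u, u⟫_ℂ = 1 := by
      rw [show (Complex.re ⟪u, u⟫_ℂ) = RCLike.re ⟪u, u⟫_ℂ from rfl, inner_self_eq_norm_sq, hu]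
      norm_num
    have h5 : Complex.im ⟪u, u⟫_ℂ = 0 := by
      rw [show (Complex.im ⟪u, u⟫_ℂ) = RCLike.im ⟪u, u⟫_ℂ from rfl]
      exact inner_self_im u
    rw [h4, h5]
    ring
  -- bound ‖Q (adjoint A v)‖²
  have hg : Continuous fun x : ℝ => (Real.sqrt x + ε)⁻¹ :=
    hsqrtc.inv₀ fun x => by positivity
  have hQQ : Q * Q = cfc (fun x : ℝ => (Real.sqrt x + ε)⁻¹) a := by
    rw [hQ_def, ← cfc_mul q q a hq.continuousOn hq.continuousOn]
    congr 1
    funext x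
    rw [hq_def]
    rw [← mul_inv, Real.mul_self_sqrt (by positivity)]
  have hcomm : A * cfc (fun x : ℝ => (Real.sqrt x + ε)⁻¹) a
      = cfc (fun x : ℝ => (Real.sqrt x + ε)⁻¹) b * A := by
    rw [ha_def, hb_def, ← star_eq_adjoint]
    exact cfc_comm_aux A hg
  have hQAv : ‖Q (adjoint A v)‖ ^ 2
      ≤ Complex.re ⟪cfc Real.sqrt b v, v⟫_ℂ := by
    rw [norm_sq_eq_re_inner hQ_sa, ← mul_apply_eq_comp (F := H →L[ℂ] H), hQQ]
    have h6 : ⟪cfc (fun x : ℝ => (Real.sqrt x + ε)⁻¹) a (adjoint A v), adjoint A v⟫_ℂ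
        = ⟪(A * cfc (fun x : ℝ => (Real.sqrt x + ε)⁻¹) a * adjoint A) v, v⟫_ℂ := by
      rw [mul_apply_eq_comp (F := H →L[ℂ] H), mul_apply_eq_comp (F := H →L[ℂ] H), ← adjoint_inner_right A _ v]
    rw [h6, hcomm]
    have h7 : cfc (fun x : ℝ => (Real.sqrt x + ε)⁻¹) b * A * adjoint A
        = cfc (fun x : ℝ => (Real.sqrt x + ε)⁻¹ * x) b := by
      calc cfc (fun x : ℝ => (Real.sqrt x + ε)⁻¹) b * A * adjoint A
          = cfc (fun x : ℝ => (Real.sqrt x + ε)⁻¹) b * b := by rw [mul_assoc]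
        _ = cfc (fun x : ℝ => (Real.sqrt x + ε)⁻¹) b * cfc (fun x : ℝ => x) b :=
            congrArg (fun X => cfc (fun x : ℝ => (Real.sqrt x + ε)⁻¹) b * X) (cfc_id' ℝ b).symm
        _ = cfc (fun x : ℝ => (Real.sqrt x + ε)⁻¹ * x) b :=
            (cfc_mul (fun x : ℝ => (Real.sqrt x + ε)⁻¹) (fun x : ℝ => x) b
              hg.continuousOn continuous_id'.continuousOn).symm
    rw [h7]
    apply re_inner_le_of_le'
    apply cfc_mono
    · intro x hx
      have hx0 : 0 ≤ x := spectrum_nonneg_of_nonneg hb_nonneg hx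
      rw [inv_mul_le_iff₀ (by positivity)]
      nlinarith [Real.mul_self_sqrt hx0, Real.sqrt_nonneg x, hε]
    · exact (hg.mul continuous_id).continuousOn
    · exact Real.continuous_sqrt.continuousOn
  have hcs : ‖⟪A u, v⟫_ℂ‖ ≤ ‖P u‖ * ‖Q (adjoint A v)‖ := by
    rw [key]
    exact norm_inner_le_norm _ _
  calc ‖⟪A u, v⟫_ℂ‖ ^ 2 ≤ (‖P u‖ * ‖Q (adjoint A v)‖) ^ 2 := by
        apply pow_le_pow_left₀ (norm_nonneg _) hcs
    _ = ‖P u‖ ^ 2 * ‖Q (adjoint A v)‖ ^ 2 := by ring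
    _ ≤ (Complex.re ⟪cfc Real.sqrt a u, u⟫_ℂ + ε) * Complex.re ⟪cfc Real.sqrt b v, v⟫_ℂ := by
        rw [hPu]
        apply mul_le_mul_of_nonneg_left hQAv
        rw [← hPu]
        positivity

lemma re_inner_nonneg_of_nonneg {T : H →L[ℂ] H} (hT : 0 ≤ T) (x : H) :
    0 ≤ Complex.re ⟪T x, x⟫_ℂ := by
  have := ((nonneg_iff_isPositive T).mp hT).re_inner_nonneg_left x
  simpa [RCLike.re] using this

lemma sqrt_cfc_nonneg (T : H →L[ℂ] H) : 0 ≤ cfc Real.sqrt T :=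
  cfc_nonneg fun x _ => Real.sqrt_nonneg x

lemma mixed_schwarz (A : H →L[ℂ] H) {u : H} (v : H) (hu : ‖u‖ = 1) :
    ‖⟪A u, v⟫_ℂ‖ ^ 2 ≤ Complex.re ⟪cfc Real.sqrt (adjoint A * A) u, u⟫_ℂ *
      Complex.re ⟪cfc Real.sqrt (A * adjoint A) v, v⟫_ℂ := by
  set α := Complex.re ⟪cfc Real.sqrt (adjoint A * A) u, u⟫_ℂ with hα
  set β := Complex.re ⟪cfc Real.sqrt (A * adjoint A) v, v⟫_ℂ with hβ
  have hβ0 : 0 ≤ β := re_inner_nonneg_of_nonneg (sqrt_cfc_nonneg _) v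
  apply le_of_forall_pos_le_add
  intro ε' hε'
  have hεd : 0 < ε' / (β + 1) := by positivity
  have h := mixed_schwarz_eps A v hu hεd
  calc ‖⟪A u, v⟫_ℂ‖ ^ 2 ≤ (α + ε' / (β + 1)) * β := h
    _ = α * β + (ε' / (β + 1)) * β := by ring
    _ ≤ α * β + ε' := by
        have : (ε' / (β + 1)) * β ≤ ε' := by
          rw [div_mul_eq_mul_div, div_le_iff₀ (by positivity)]
          nlinarith
        linarith

lemma rpow_mean_le {a b r : ℝ} (ha : 0 ≤ a) (hb : 0 ≤ b) (hr : 1 ≤ r) :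
    (1/2 * a + 1/2 * b) ^ r ≤ 1/2 * a ^ r + 1/2 * b ^ r := by
  have key := NNReal.rpow_arith_mean_le_arith_mean2_rpow (1/2) (1/2)
    a.toNNReal b.toNNReal (by rw [← NNReal.coe_inj]; push_cast; norm_num) hr
  have hcoe := NNReal.coe_le_coe.mpr key
  push_cast [NNReal.coe_rpow, Real.coe_toNNReal a ha, Real.coe_toNNReal b hb] at hcoe
  convert hcoe using 2 <;> norm_num

lemma sq_le_to_rpow {x α β r : ℝ} (hx : 0 ≤ x) (hα : 0 ≤ α) (hβ : 0 ≤ β) (hr : 1 ≤ r)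
    (h : x ^ 2 ≤ α * β) : x ^ r ≤ 1/2 * (α ^ r + β ^ r) := by
  have hr2 : (0:ℝ) ≤ r / 2 := by linarith
  have e1 : x ^ r = (x ^ (2:ℕ)) ^ (r / 2) := by
    rw [← Real.rpow_natCast x 2, ← Real.rpow_mul hx]
    congr 1
    ring
  have e2 : (α * β) ^ (r/2) = α ^ (r/2) * β ^ (r/2) := Real.mul_rpow hα hβ
  have e3 : (α ^ (r/2)) ^ (2:ℕ) = α ^ r := by
    rw [← Real.rpow_natCast (α ^ (r/2)) 2, ← Real.rpow_mul hα]
    congr 1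
    ring
  have e4 : (β ^ (r/2)) ^ (2:ℕ) = β ^ r := by
    rw [← Real.rpow_natCast (β ^ (r/2)) 2, ← Real.rpow_mul hβ]
    congr 1
    ring
  have h5 : (x ^ (2:ℕ)) ^ (r/2) ≤ (α * β) ^ (r/2) :=
    Real.rpow_le_rpow (by positivity) h hr2
  have h6 := two_mul_le_add_sq (α ^ (r/2)) (β ^ (r/2))
  rw [e3, e4] at h6
  rw [e1]
  rw [e2] at h5
  linarith

end Aux

theorem stmt5 {H : Type*} [NormedAddCommGroup H] [InnerProductSpace ℂ H] [CompleteSpace H]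
    {Ω : Type*} [Nonempty Ω] (k : Ω → H) (hk : ∀ l, ‖k l‖ = 1)
    (r : ℝ) (hr : 1 ≤ r) (A : H →L[ℂ] H) :
    berNum k A ^ r ≤ (⨅ t : Set.Icc (0 : ℝ) 1, tber k (t : ℝ) A ^ r) ∧
    (⨅ t : Set.Icc (0 : ℝ) 1, tber k (t : ℝ) A ^ r) ≤
      (1 / 2) * berNorm k (rpowOp (absOp A) r + rpowOp (absOp (adjoint A)) r) := by
  have hr0 : (0:ℝ) < r := by linarith
  -- basic bounds on inner products
  have hinner1 : ∀ x y : H, ‖x‖ = 1 → ‖y‖ = 1 → ‖⟪A x, y⟫_ℂ‖ ≤ ‖A‖ := by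
    intro x y hx hy
    calc ‖⟪A x, y⟫_ℂ‖ ≤ ‖A x‖ * ‖y‖ := norm_inner_le_norm _ _
      _ = ‖A x‖ := by rw [hy, mul_one]
      _ ≤ ‖A‖ * ‖x‖ := A.le_opNorm x
      _ = ‖A‖ := by rw [hx, mul_one]
  have hinner2 : ∀ x y : H, ‖x‖ = 1 → ‖y‖ = 1 → ‖⟪adjoint A x, y⟫_ℂ‖ ≤ ‖A‖ := by
    intro x y hx hy
    rw [adjoint_inner_left]
    calc ‖⟪x, A y⟫_ℂ‖ ≤ ‖x‖ * ‖A y‖ := norm_inner_le_norm _ _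
      _ = ‖A y‖ := by rw [hx, one_mul]
      _ ≤ ‖A‖ * ‖y‖ := A.le_opNorm y
      _ = ‖A‖ := by rw [hy, mul_one]
  -- boundedness of tber family
  have htber_bdd : ∀ t : ℝ, t ∈ Set.Icc (0:ℝ) 1 → BddAbove (Set.range fun p : Ω × Ω =>
      t * ‖⟪A (k p.1), k p.2⟫_ℂ‖ + (1 - t) * ‖⟪adjoint A (k p.1), k p.2⟫_ℂ‖) := by
    intro t ht
    refine ⟨‖A‖, fun x hx => ?_⟩
    obtain ⟨p, rfl⟩ := hx
    calc t * ‖⟪A (k p.1), k p.2⟫_ℂ‖ + (1 - t) * ‖⟪adjoint A (k p.1), k p.2⟫_ℂ‖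
        ≤ t * ‖A‖ + (1 - t) * ‖A‖ := by
          apply add_le_add
          · exact mul_le_mul_of_nonneg_left (hinner1 _ _ (hk _) (hk _)) ht.1
          · exact mul_le_mul_of_nonneg_left (hinner2 _ _ (hk _) (hk _)) (by linarith [ht.2])
      _ = ‖A‖ := by ring
  have htber_nonneg : ∀ t : ℝ, t ∈ Set.Icc (0:ℝ) 1 → 0 ≤ tber k t A := by
    intro t ht
    apply Real.iSup_nonneg
    intro p
    have h1 := ht.1
    have h2 := ht.2
    have := norm_nonneg (⟪A (k p.1), k p.2⟫_ℂ)
    have := norm_nonneg (⟪adjoint A (k p.1), k p.2⟫_ℂ)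
    have : 0 ≤ 1 - t := by linarith
    positivity
  -- diagonal value
  have hdiag : ∀ (t : ℝ) (l : Ω),
      t * ‖⟪A (k l), k l⟫_ℂ‖ + (1 - t) * ‖⟪adjoint A (k l), k l⟫_ℂ‖ = ‖⟪A (k l), k l⟫_ℂ‖ := by
    intro t l
    have : ‖⟪adjoint A (k l), k l⟫_ℂ‖ = ‖⟪A (k l), k l⟫_ℂ‖ := by
      rw [adjoint_inner_left, ← inner_conj_symm]
      exact RCLike.norm_conj _
    rw [this]
    ring
  have hberNum_le : ∀ t : ℝ, t ∈ Set.Icc (0:ℝ) 1 → berNum k A ≤ tber k t A := by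
    intro t ht
    apply ciSup_le
    intro l
    rw [← hdiag t l]
    exact le_ciSup (htber_bdd t ht) (l, l)
  constructor
  · apply le_ciInf
    intro t
    apply Real.rpow_le_rpow
    · exact Real.iSup_nonneg fun l => norm_nonneg _
    · exact hberNum_le t t.2
    · exact hr0.le
  · -- second inequality
    set S := rpowOp (absOp A) r + rpowOp (absOp (adjoint A)) r with hS_def
    have hS_bdd : BddAbove (Set.range fun p : Ω × Ω => ‖⟪S (k p.1), k p.2⟫_ℂ‖) := by
      refine ⟨‖S‖, fun x hx => ?_⟩
      obtain ⟨p, rfl⟩ := hx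
      calc ‖⟪S (k p.1), k p.2⟫_ℂ‖ ≤ ‖S (k p.1)‖ * ‖k p.2‖ := norm_inner_le_norm _ _
        _ = ‖S (k p.1)‖ := by rw [hk, mul_one]
        _ ≤ ‖S‖ * ‖k p.1‖ := S.le_opNorm _
        _ = ‖S‖ := by rw [hk, mul_one]
    have hN0 : 0 ≤ berNorm k S := Real.iSup_nonneg fun p => norm_nonneg _
    set N := berNorm k S with hN_def
    -- positivity of the abs operators
    have habs1 : 0 ≤ absOp A := sqrt_cfc_nonneg _
    have habs2 : 0 ≤ absOp (adjoint A) := sqrt_cfc_nonneg _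
    -- key pointwise bound
    have hkey : ∀ p : Ω × Ω,
        (1/2 * ‖⟪A (k p.1), k p.2⟫_ℂ‖ + (1 - 1/2) * ‖⟪adjoint A (k p.1), k p.2⟫_ℂ‖) ^ r
          ≤ 1/2 * N := by
      intro p
      set u := k p.1
      set v := k p.2
      set a1 := ‖⟪A u, v⟫_ℂ‖ with ha1
      set b1 := ‖⟪adjoint A u, v⟫_ℂ‖ with hb1
      have ha1' : 0 ≤ a1 := norm_nonneg _
      have hb1' : 0 ≤ b1 := norm_nonneg _
      set αu := Complex.re ⟪absOp A u, u⟫_ℂ with hαu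
      set αv := Complex.re ⟪absOp A v, v⟫_ℂ with hαv
      set βu := Complex.re ⟪absOp (adjoint A) u, u⟫_ℂ with hβu
      set βv := Complex.re ⟪absOp (adjoint A) v, v⟫_ℂ with hβv
      have hαu0 : 0 ≤ αu := re_inner_nonneg_of_nonneg habs1 u
      have hαv0 : 0 ≤ αv := re_inner_nonneg_of_nonneg habs1 v
      have hβu0 : 0 ≤ βu := re_inner_nonneg_of_nonneg habs2 u
      have hβv0 : 0 ≤ βv := re_inner_nonneg_of_nonneg habs2 v
      -- mixed Schwarz for A
      have hms1 : a1 ^ 2 ≤ αu * βv := by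
        have := mixed_schwarz A v (hk p.1)
        rw [show cfc Real.sqrt (A * adjoint A)
            = absOp (adjoint A) by rw [absOp, adjoint_adjoint]] at this
        exact this
      -- mixed Schwarz for adjoint A
      have hms2 : b1 ^ 2 ≤ βu * αv := by
        have := mixed_schwarz (adjoint A) v (hk p.1)
        rw [adjoint_adjoint] at this
        rw [show cfc Real.sqrt (A * adjoint A)
            = absOp (adjoint A) by rw [absOp, adjoint_adjoint]] at this
        rw [show cfc Real.sqrt (adjoint A * A) = absOp A from rfl] at this
        exact this
      -- McCarthy
      have hmc1 : αu ^ r ≤ Complex.re ⟪rpowOp (absOp A) r u, u⟫_ℂ := mccarthy habs1 hr (hk p.1)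
      have hmc2 : αv ^ r ≤ Complex.re ⟪rpowOp (absOp A) r v, v⟫_ℂ := mccarthy habs1 hr (hk p.2)
      have hmc3 : βu ^ r ≤ Complex.re ⟪rpowOp (absOp (adjoint A)) r u, u⟫_ℂ :=
        mccarthy habs2 hr (hk p.1)
      have hmc4 : βv ^ r ≤ Complex.re ⟪rpowOp (absOp (adjoint A)) r v, v⟫_ℂ :=
        mccarthy habs2 hr (hk p.2)
      -- combine
      have h1 : a1 ^ r ≤ 1/2 * (αu ^ r + βv ^ r) := sq_le_to_rpow ha1' hαu0 hβv0 hr hms1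
      have h2 : b1 ^ r ≤ 1/2 * (βu ^ r + αv ^ r) := sq_le_to_rpow hb1' hβu0 hαv0 hr hms2
      have h3 : (1/2 * a1 + (1 - 1/2) * b1) ^ r ≤ 1/2 * a1 ^ r + 1/2 * b1 ^ r := by
        rw [show (1 - 1/2 : ℝ) = 1/2 by norm_num]
        exact rpow_mean_le ha1' hb1' hr
      -- the S inner products
      have hSu : Complex.re ⟪S u, u⟫_ℂ = Complex.re ⟪rpowOp (absOp A) r u, u⟫_ℂ
          + Complex.re ⟪rpowOp (absOp (adjoint A)) r u, u⟫_ℂ := by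
        rw [hS_def]
        simp [add_apply, inner_add_left]
      have hSv : Complex.re ⟪S v, v⟫_ℂ = Complex.re ⟪rpowOp (absOp A) r v, v⟫_ℂ
          + Complex.re ⟪rpowOp (absOp (adjoint A)) r v, v⟫_ℂ := by
        rw [hS_def]
        simp [add_apply, inner_add_left]
      have hSuN : Complex.re ⟪S u, u⟫_ℂ ≤ N := by
        calc Complex.re ⟪S u, u⟫_ℂ ≤ ‖⟪S u, u⟫_ℂ‖ := by
              exact Complex.re_le_norm _
          _ ≤ N := le_ciSup hS_bdd (p.1, p.1)
      have hSvN : Complex.re ⟪S v, v⟫_ℂ ≤ N := by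
        calc Complex.re ⟪S v, v⟫_ℂ ≤ ‖⟪S v, v⟫_ℂ‖ := by
              exact Complex.re_le_norm _
          _ ≤ N := le_ciSup hS_bdd (p.2, p.2)
      linarith
    -- conclude
    have htber_le : tber k (1/2 : ℝ) A ≤ (1/2 * N) ^ r⁻¹ := by
      apply ciSup_le
      intro p
      have h := hkey p
      have hX : 0 ≤ 1/2 * ‖⟪A (k p.1), k p.2⟫_ℂ‖
          + (1 - 1/2) * ‖⟪adjoint A (k p.1), k p.2⟫_ℂ‖ := by positivity
      calc 1/2 * ‖⟪A (k p.1), k p.2⟫_ℂ‖ + (1 - 1/2) * ‖⟪adjoint A (k p.1), k p.2⟫_ℂ‖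
          = ((1/2 * ‖⟪A (k p.1), k p.2⟫_ℂ‖
            + (1 - 1/2) * ‖⟪adjoint A (k p.1), k p.2⟫_ℂ‖) ^ r) ^ r⁻¹ :=
            (Real.rpow_rpow_inv hX hr0.ne').symm
        _ ≤ (1/2 * N) ^ r⁻¹ := Real.rpow_le_rpow (by positivity) h (by positivity)
    have hhalf : (1/2 : ℝ) ∈ Set.Icc (0:ℝ) 1 := by norm_num
    have hfinal : tber k (1/2 : ℝ) A ^ r ≤ 1/2 * N := by
      calc tber k (1/2 : ℝ) A ^ r ≤ ((1/2 * N) ^ r⁻¹) ^ r :=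
            Real.rpow_le_rpow (htber_nonneg _ hhalf) htber_le hr0.le
        _ = 1/2 * N := Real.rpow_inv_rpow (by positivity) hr0.ne'
    have hbddbelow : BddBelow (Set.range fun t : Set.Icc (0:ℝ) 1 => tber k (t : ℝ) A ^ r) := by
      refine ⟨0, fun x hx => ?_⟩
      obtain ⟨t, rfl⟩ := hx
      exact Real.rpow_nonneg (htber_nonneg _ t.2) r
    calc (⨅ t : Set.Icc (0 : ℝ) 1, tber k (t : ℝ) A ^ r)
        ≤ tber k ((⟨1/2, hhalf⟩ : Set.Icc (0:ℝ) 1) : ℝ) A ^ r := ciInf_le hbddbelow _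
      _ ≤ 1/2 * N := hfinal
      _ = 1 / 2 * N := by norm_num
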